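/- Let X be a topological space. If X is a small loop transfer space (SLT at every point x ∈ X), then for every x ∈ X the subgroup π₁^s(X, x) is a normal subgroup of π₁(X, x). -/

import Mathlib

open TopologicalSpace

attribute [local instance] Path.Homotopic.setoid

/-- The homotopy class of a loop, as an element of the fundamental group. -/
noncomputable def loopClass {X : Type*} [TopologicalSpace X] {x : X} (γ : Path x x) :
    FundamentalGroup X x :=
  FundamentalGroup.fromPath (X := TopCat.of X) ⟦γ⟧

/-- `α` is a small loop transfer (SLT) path: for every open neighborhood `U` of `α 0`
there is an open neighborhood `V` of `α 1` such that every loop at `α 1` inside `V` is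
path-homotopic to some loop at `α 0` inside `U` conjugated along `α`. -/
def IsSLTPath {X : Type*} [TopologicalSpace X] {x₀ x₁ : X} (α : Path x₀ x₁) : Prop :=
  ∀ U : Set X, IsOpen U → x₀ ∈ U →
    ∃ V : Set X, IsOpen V ∧ x₁ ∈ V ∧
      ∀ γ : Path x₁ x₁, (∀ t, γ t ∈ V) →
        ∃ γ' : Path x₀ x₀, (∀ t, γ' t ∈ U) ∧
          γ'.Homotopic ((α.trans γ).trans α.symm)

/-- `X` is a small loop transfer space at `x₀`: every path starting at `x₀` is an SLT path. -/
def IsSLTAt (X : Type*) [TopologicalSpace X] (x₀ : X) : Prop :=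
  ∀ (x₁ : X) (α : Path x₀ x₁), IsSLTPath α

/-- `X` is SLTL at `x₀`: every loop based at `x₀` is an SLT path. -/
def IsSLTLAt (X : Type*) [TopologicalSpace X] (x₀ : X) : Prop :=
  ∀ γ : Path x₀ x₀, IsSLTPath γ

/-- `X` is SLTP at `x₀`: every non-loop path starting at `x₀` is an SLT path. -/
def IsSLTPAt (X : Type*) [TopologicalSpace X] (x₀ : X) : Prop :=
  ∀ (x₁ : X) (α : Path x₀ x₁), x₁ ≠ x₀ → IsSLTPath α

/-- The set of homotopy classes of loops based at `x₀` with image contained in `U`;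
this is the image `i₊π₁(U, x₀)` of the homomorphism induced by the inclusion `U → X`. -/
noncomputable def loopClassesIn {X : Type*} [TopologicalSpace X] (x₀ : X) (U : Set X) :
    Set (FundamentalGroup X x₀) :=
  { g | ∃ γ : Path x₀ x₀, (∀ t, γ t ∈ U) ∧ g = loopClass γ }

/-- The quotient topology on the fundamental group, coinduced by the map from the loop
space (with the compact-open topology) sending a loop to its homotopy class. -/
noncomputable def qtop (X : Type*) [TopologicalSpace X] (x₀ : X) :
    TopologicalSpace (FundamentalGroup X x₀) :=
  coinduced (fun γ : Path x₀ x₀ => loopClass γ) inferInstance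

/-- The whisker topology on the fundamental group, generated by the basis of cosets
`[α] · i₊π₁(U, x₀)` for `U` an open neighborhood of `x₀`. -/
noncomputable def whTop (X : Type*) [TopologicalSpace X] (x₀ : X) :
    TopologicalSpace (FundamentalGroup X x₀) :=
  generateFrom { S | ∃ (g : FundamentalGroup X x₀) (U : Set X), IsOpen U ∧ x₀ ∈ U ∧
      S = (fun h => g * h) '' loopClassesIn x₀ U }

/-- A loop based at `x` is small if every open neighborhood of `x` contains a
representative of its homotopy class. -/
def IsSmallLoop {X : Type*} [TopologicalSpace X] {x : X} (γ : Path x x) : Prop :=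
  ∀ U : Set X, IsOpen U → x ∈ U →
    ∃ δ : Path x x, (∀ t, δ t ∈ U) ∧ δ.Homotopic γ

/-- `π₁ˢ(X, x)`: the set of homotopy classes of small loops based at `x`. -/
noncomputable def pi1s {X : Type*} [TopologicalSpace X] (x : X) :
    Set (FundamentalGroup X x) :=
  { g | ∃ γ : Path x x, IsSmallLoop γ ∧ g = loopClass γ }

/-- `π₁ˢᵍ(X, x₀)`: the subgroup generated by classes `[α * β * α⁻¹]` where `α` is a path
starting at `x₀` and `β` is a small loop based at `α 1`. -/
noncomputable def pi1sg {X : Type*} [TopologicalSpace X] (x₀ : X) :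
    Subgroup (FundamentalGroup X x₀) :=
  Subgroup.closure { g | ∃ (x₁ : X) (α : Path x₀ x₁) (β : Path x₁ x₁), IsSmallLoop β ∧
      g = loopClass ((α.trans β).trans α.symm) }

/-- The path Spanier group of a path open cover `V` at `x₀`: the subgroup generated by the
classes `[α * β * α⁻¹]` where `α` is a path starting at `x₀` and `β` is a loop based at
`α 1` with image inside `V α`. -/
noncomputable def pathSpanierGroup {X : Type*} [TopologicalSpace X] (x₀ : X)
    (V : ∀ x₁ : X, Path x₀ x₁ → Set X) : Subgroup (FundamentalGroup X x₀) :=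
  Subgroup.closure { g | ∃ (x₁ : X) (α : Path x₀ x₁) (β : Path x₁ x₁),
      (∀ t, β t ∈ V x₁ α) ∧ g = loopClass ((α.trans β).trans α.symm) }

/-- `X` is small "small loop" transfer (SSLT) at `x₀`. -/
def IsSSLTAt (X : Type*) [TopologicalSpace X] (x₀ : X) : Prop :=
  ∀ (x₁ : X) (α : Path x₀ x₁) (U : Set X), IsOpen U → x₀ ∈ U →
    ∃ V : Set X, IsOpen V ∧ x₁ ∈ V ∧
      ∀ β : Path x₁ x₁, IsSmallLoop β → (∀ t, β t ∈ V) →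
        ∃ γ : Path x₀ x₀, (∀ t, γ t ∈ U) ∧
          γ.Homotopic ((α.trans β).trans α.symm)

/-- `X` is semilocally small generated: every point has an open neighborhood `U` with
`i₊π₁(U, x) ≤ π₁ˢᵍ(X, x)`. -/
noncomputable def SemilocallySmallGenerated (X : Type*) [TopologicalSpace X] : Prop :=
  ∀ x : X, ∃ U : Set X, IsOpen U ∧ x ∈ U ∧ loopClassesIn x U ⊆ (pi1sg x : Set (FundamentalGroup X x))

/-! Small loops are closed under concatenation and reversal, so `π₁ˢ(X, x)` is a subgroup.
Conjugating a small loop `γ` by `[α]` transports it along the loop `α⁻¹`: given `U ∋ x`,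
the SLT property of `α⁻¹` gives a neighborhood `V` of `x` whose loops transport into `U`, and
`γ` has a representative inside `V`. -/

section SmallLoops

variable {X : Type*} [TopologicalSpace X]

lemma loopClass_eq_of_homotopic {x : X} {γ δ : Path x x} (h : γ.Homotopic δ) :
    loopClass γ = loopClass δ :=
  Quotient.sound h

lemma loopClass_mul {x : X} (γ δ : Path x x) :
    loopClass γ * loopClass δ = loopClass (δ.trans γ) := rfl

lemma loopClass_refl (x : X) : loopClass (Path.refl x) = 1 := rfl

lemma loopClass_symm {x : X} (γ : Path x x) : loopClass γ.symm = (loopClass γ)⁻¹ := by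
  refine eq_inv_of_mul_eq_one_left ?_
  rw [loopClass_mul, ← loopClass_refl x]
  exact (loopClass_eq_of_homotopic ⟨Path.Homotopy.reflTransSymm γ⟩).symm

lemma loopClass_surjective (x : X) : Function.Surjective (loopClass (x := x)) :=
  fun g => (Quotient.exists_rep (g : Path.Homotopic.Quotient x x)).imp fun _ => id

lemma Path.trans_mem {x₀ x₁ x₂ : X} {U : Set X} {p : Path x₀ x₁} {q : Path x₁ x₂}
    (hp : ∀ t, p t ∈ U) (hq : ∀ t, q t ∈ U) (t : unitInterval) : p.trans q t ∈ U := by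
  have hrange : Set.range (p.trans q) ⊆ U := by
    rw [Path.trans_range]
    exact Set.union_subset (Set.range_subset_iff.2 hp) (Set.range_subset_iff.2 hq)
  exact hrange ⟨t, rfl⟩

lemma IsSmallLoop.refl (x : X) : IsSmallLoop (Path.refl x) :=
  fun _ _ hx => ⟨Path.refl x, fun _ => hx, Path.Homotopic.refl _⟩

lemma IsSmallLoop.trans {x : X} {γ δ : Path x x} (hγ : IsSmallLoop γ) (hδ : IsSmallLoop δ) :
    IsSmallLoop (γ.trans δ) := by
  intro U hU hx
  obtain ⟨γ', hγ'U, hγ'⟩ := hγ U hU hx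
  obtain ⟨δ', hδ'U, hδ'⟩ := hδ U hU hx
  exact ⟨γ'.trans δ', Path.trans_mem hγ'U hδ'U, hγ'.hcomp hδ'⟩

lemma IsSmallLoop.symm {x : X} {γ : Path x x} (hγ : IsSmallLoop γ) : IsSmallLoop γ.symm := by
  intro U hU hx
  obtain ⟨δ, hδU, hδ⟩ := hγ U hU hx
  exact ⟨δ.symm, fun t => hδU (unitInterval.symm t), hδ.symm₂⟩

lemma IsSLTPath.isSmallLoop_conj {x₀ x₁ : X} {α : Path x₀ x₁} (hα : IsSLTPath α)
    {γ : Path x₁ x₁} (hγ : IsSmallLoop γ) : IsSmallLoop ((α.trans γ).trans α.symm) := by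
  intro U hU hx₀
  obtain ⟨V, hV, hx₁, htransfer⟩ := hα U hU hx₀
  obtain ⟨δ, hδV, hδγ⟩ := hγ V hV hx₁
  obtain ⟨δ', hδ'U, hδ'⟩ := htransfer δ hδV
  exact ⟨δ', hδ'U, hδ'.trans (((Path.Homotopic.refl α).hcomp hδγ).hcomp (.refl _))⟩

noncomputable def pi1sSubgroup (x : X) : Subgroup (FundamentalGroup X x) where
  carrier := pi1s x
  one_mem' := ⟨Path.refl x, IsSmallLoop.refl x, rfl⟩
  mul_mem' := by
    rintro _ _ ⟨γ, hγ, rfl⟩ ⟨δ, hδ, rfl⟩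
    exact ⟨δ.trans γ, hδ.trans hγ, loopClass_mul γ δ⟩
  inv_mem' := by
    rintro _ ⟨γ, hγ, rfl⟩
    exact ⟨γ.symm, hγ.symm, (loopClass_symm γ).symm⟩

lemma pi1sSubgroup_normal_of_isSLTLAt {x : X} (h : IsSLTLAt X x) : (pi1sSubgroup x).Normal := by
  constructor
  rintro _ ⟨γ, hγ, rfl⟩ g
  obtain ⟨α, rfl⟩ := loopClass_surjective x g
  -- multiplication in `FundamentalGroup` composes right to left, so `[α] * [γ] * [α]⁻¹` is
  -- `γ` transported along `α.symm`
  have hconj : IsSmallLoop ((α.symm.trans γ).trans α) := by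
    simpa only [Path.symm_symm] using (h α.symm).isSmallLoop_conj hγ
  refine ⟨_, hconj, ?_⟩
  rw [mul_assoc, ← loopClass_symm, loopClass_mul, loopClass_mul]

end SmallLoops

/-- If `X` is an SLT space (SLT at every point), then for every `x ∈ X` the
subgroup `π₁ˢ(X, x)` is a normal subgroup of `π₁(X, x)`. -/
theorem pi1s_normal_of_slt {X : Type*} [TopologicalSpace X]
    (h : ∀ x : X, IsSLTAt X x) (x : X) :
    ∃ H : Subgroup (FundamentalGroup X x),
      (H : Set (FundamentalGroup X x)) = pi1s x ∧ H.Normal :=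
  ⟨pi1sSubgroup x, rfl, pi1sSubgroup_normal_of_isSLTLAt fun α => h x x α⟩
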